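/- Let χ : ℝ^{2d} → ℝ^{2d} be a bi-Lipschitz bijection (χ and χ^{-1} Lipschitz). Then for every δ ∈ (0,1) there exists δ* with 0 < δ* < δ, depending only on χ and δ and independent of Γ, such that for every subset Γ ⊆ ℝ^{2d} one has χ(Γ_{δ*}) ⊆ (χ(Γ))_δ and (χ(Γ))_{δ*} ⊆ χ(Γ_δ). -/

import Mathlib

/-!
A Lipschitz map `f` distorts the weight `⟨·⟩` by at most a constant factor:
`⟨f z⟩ ≤ (⟨f 0⟩ + K) ⟨z⟩`, because `⟨·⟩` is itself `1`-Lipschitz and dominates both `1` and `|·|`.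
Applying this to `χ` and `χ⁻¹`, the weights `⟨z⟩` and `⟨χ z⟩` are comparable, so a ball of radius
`δ* ⟨z₀⟩` around `z₀` is mapped by `χ` into a ball of radius `≲ δ* ⟨χ z₀⟩` around `χ z₀`, and
symmetrically for `χ⁻¹`; a small enough `δ*` then gives both inclusions.
-/

open Real

noncomputable section

/-- The Japanese bracket `⟨z⟩ = (1 + |z|²)^{1/2}`. -/
def jap {n : ℕ} (z : EuclideanSpace ℝ (Fin n)) : ℝ := Real.sqrt (1 + ‖z‖ ^ 2)

/-- The `δ`-neighborhood `Γ_δ = {z : |z − z₀| < δ⟨z₀⟩ for some z₀ ∈ Γ}`. -/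
def nbhd {n : ℕ} (Γ : Set (EuclideanSpace ℝ (Fin n))) (δ : ℝ) :
    Set (EuclideanSpace ℝ (Fin n)) :=
  {z | ∃ z₀ ∈ Γ, ‖z - z₀‖ < δ * jap z₀}

section Jap

variable {n m : ℕ}

lemma one_le_jap (z : EuclideanSpace ℝ (Fin n)) : 1 ≤ jap z :=
  Real.one_le_sqrt.mpr (by nlinarith [sq_nonneg ‖z‖])

lemma jap_pos (z : EuclideanSpace ℝ (Fin n)) : 0 < jap z :=
  zero_lt_one.trans_le (one_le_jap z)

lemma norm_le_jap (z : EuclideanSpace ℝ (Fin n)) : ‖z‖ ≤ jap z :=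
  Real.le_sqrt_of_sq_le (by linarith)

lemma jap_le_jap_add_norm_sub (a b : EuclideanSpace ℝ (Fin n)) :
    jap a ≤ jap b + ‖a - b‖ := by
  have hb := norm_le_jap b
  have hab : ‖a‖ ≤ ‖b‖ + ‖a - b‖ := norm_le_norm_add_norm_sub' a b
  have hsq : jap b ^ 2 = 1 + ‖b‖ ^ 2 := Real.sq_sqrt (by positivity)
  refine Real.sqrt_le_iff.mpr ⟨add_nonneg (jap_pos b).le (norm_nonneg _), ?_⟩
  nlinarith [norm_nonneg a, norm_nonneg b, norm_nonneg (a - b)]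

lemma LipschitzWith.jap_apply_le {K : NNReal}
    {f : EuclideanSpace ℝ (Fin n) → EuclideanSpace ℝ (Fin m)} (hf : LipschitzWith K f)
    (z : EuclideanSpace ℝ (Fin n)) : jap (f z) ≤ (jap (f 0) + K) * jap z := by
  have hf0 : ‖f z - f 0‖ ≤ K * ‖z‖ := by simpa [dist_eq_norm] using hf.dist_le_mul z 0
  calc jap (f z) ≤ jap (f 0) + K * ‖z‖ := by linarith [jap_le_jap_add_norm_sub (f z) (f 0)]
    _ ≤ jap (f 0) * jap z + K * jap z := by
        gcongr
        · exact le_mul_of_one_le_right (jap_pos _).le (one_le_jap z)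
        · exact norm_le_jap z
    _ = (jap (f 0) + K) * jap z := by ring

end Jap

lemma image_nbhd_subset_nbhd_image {n m : ℕ} {K : NNReal} {A ε δ : ℝ}
    {f : EuclideanSpace ℝ (Fin n) → EuclideanSpace ℝ (Fin m)} (hf : LipschitzWith K f)
    (hA : ∀ z, jap z ≤ A * jap (f z)) (hε : K * A * ε < δ)
    (Γ : Set (EuclideanSpace ℝ (Fin n))) :
    f '' nbhd Γ ε ⊆ nbhd (f '' Γ) δ := by
  rintro _ ⟨z, ⟨z₀, hz₀, hz⟩, rfl⟩
  refine ⟨f z₀, Set.mem_image_of_mem f hz₀, ?_⟩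
  have hε0 : 0 ≤ ε := nonneg_of_mul_nonneg_left ((norm_nonneg _).trans hz.le) (jap_pos z₀)
  calc ‖f z - f z₀‖ ≤ K * ‖z - z₀‖ := by simpa [dist_eq_norm] using hf.dist_le_mul z z₀
    _ ≤ K * (ε * jap z₀) := by gcongr
    _ ≤ K * (ε * (A * jap (f z₀))) := by gcongr; exact hA z₀
    _ = K * A * ε * jap (f z₀) := by ring
    _ < δ * jap (f z₀) := by gcongr; exact jap_pos _

theorem statement6_general (d : ℕ)
    (χ ψ : EuclideanSpace ℝ (Fin (2 * d)) → EuclideanSpace ℝ (Fin (2 * d)))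
    (K K' : NNReal) (hχ : LipschitzWith K χ) (hψ : LipschitzWith K' ψ)
    (hleft : Function.LeftInverse ψ χ) (hright : Function.RightInverse ψ χ)
    (δ : ℝ) (hδ0 : 0 < δ) :
    ∃ δs : ℝ, 0 < δs ∧ δs < δ ∧
      ∀ Γ : Set (EuclideanSpace ℝ (Fin (2 * d))),
        χ '' nbhd Γ δs ⊆ nbhd (χ '' Γ) δ ∧
        nbhd (χ '' Γ) δs ⊆ χ '' nbhd Γ δ := by
  set A := jap (χ 0) + K
  set B := jap (ψ 0) + K'
  have hA : ∀ w, jap w ≤ A * jap (ψ w) := fun w => by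
    simpa only [hright w] using hχ.jap_apply_le (ψ w)
  have hB : ∀ z, jap z ≤ B * jap (χ z) := fun z => by
    simpa only [hleft z] using hψ.jap_apply_le (χ z)
  have hKB : 0 ≤ K * B := mul_nonneg K.coe_nonneg (add_nonneg (jap_pos _).le K'.coe_nonneg)
  have hK'A : 0 ≤ K' * A := mul_nonneg K'.coe_nonneg (add_nonneg (jap_pos _).le K.coe_nonneg)
  set M := 2 + K * B + K' * A with hM_def
  have hM : 0 < M := by positivity
  have small : ∀ c, c < M → c * (δ / M) < δ := fun c hcM => by
    rw [mul_div_assoc', div_lt_iff₀ hM, mul_comm δ]; gcongr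
  refine ⟨δ / M, by positivity, by simpa using small 1 (by linarith), fun Γ => ⟨?_, ?_⟩⟩
  · exact image_nbhd_subset_nbhd_image hχ hB (small _ (by linarith)) Γ
  · calc nbhd (χ '' Γ) (δ / M) = χ '' (ψ '' nbhd (χ '' Γ) (δ / M)) := (hright.image_image _).symm
      _ ⊆ χ '' nbhd (ψ '' (χ '' Γ)) δ := Set.image_mono <|
          image_nbhd_subset_nbhd_image hψ hA (small _ (by linarith)) _
      _ = χ '' nbhd Γ δ := by rw [hleft.image_image]

theorem statement6 (d : ℕ)
    (χ ψ : EuclideanSpace ℝ (Fin (2 * d)) → EuclideanSpace ℝ (Fin (2 * d)))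
    (K K' : NNReal) (hχ : LipschitzWith K χ) (hψ : LipschitzWith K' ψ)
    (hleft : Function.LeftInverse ψ χ) (hright : Function.RightInverse ψ χ)
    (δ : ℝ) (hδ0 : 0 < δ) (hδ1 : δ < 1) :
    ∃ δs : ℝ, 0 < δs ∧ δs < δ ∧
      ∀ Γ : Set (EuclideanSpace ℝ (Fin (2 * d))),
        χ '' nbhd Γ δs ⊆ nbhd (χ '' Γ) δ ∧
        nbhd (χ '' Γ) δs ⊆ χ '' nbhd Γ δ :=
  statement6_general d χ ψ K K' hχ hψ hleft hright δ hδ0
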